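/- If z is a unit of R, then for every m ≥ 1 the minimum Hamming weight of a nonzero codeword of R(1,m) is exactly 2^{m-1}: every nonzero c ∈ R(1,m) has at least 2^{m-1} nonzero coordinates, and the last row g_{m+1} of G_{1,m} is a nonzero codeword with exactly 2^{m-1} nonzero coordinates. Consequently, the minimum Hamming distance between distinct codewords of R(1,m) equals 2^{m-1}. -/

import Mathlib

open Polynomial

noncomputable section

/-- The ring `R = ℤ₄[u]/(u³ − 1)`. -/
abbrev R : Type := Polynomial (ZMod 4) ⧸ Ideal.span ({Polynomial.X ^ 3 - 1} : Set (Polynomial (ZMod 4)))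

/-- The image `u` of the variable in `R`. -/
def u : R := Ideal.Quotient.mk _ Polynomial.X

instance : DecidableEq R := Classical.decEq R

lemma u_pow_three : u ^ 3 = 1 := by
  have h : (Ideal.Quotient.mk (Ideal.span ({Polynomial.X ^ 3 - 1} : Set (Polynomial (ZMod 4))))
      (Polynomial.X ^ 3 - 1) : R) = 0 :=
    Ideal.Quotient.eq_zero_iff_mem.mpr (Ideal.subset_span rfl)
  have h2 : (u ^ 3 - 1 : R) = 0 := by
    simpa [u, map_sub, map_pow] using h
  linear_combination h2

/-- The ring automorphism `σ` of `R` determined by `σ(u) = u²`. -/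
def sigmaR : R →+* R :=
  Ideal.Quotient.lift _ (Polynomial.aeval (u ^ 2)).toRingHom (by
    intro p hp
    obtain ⟨q, rfl⟩ := Ideal.mem_span_singleton.mp hp
    have h6 : ((u ^ 2) ^ 3 : R) = 1 := by
      rw [← pow_mul]
      have : (u : R) ^ (2 * 3) = (u ^ 3) ^ 2 := by ring
      rw [this, u_pow_three, one_pow]
    simp [map_mul, map_sub, map_pow, h6])

/-- The element `δ = 2 + 2u + 2u²` of `R`. -/
def δR : R := 2 + 2 * u + 2 * u ^ 2

/-- The map `ρ : Rⁿ → Rⁿ`, reversing coordinates and applying `σ` coordinatewise. -/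
def ρmap (n : ℕ) (x : Fin n → R) : Fin n → R := fun i => sigmaR (x (Fin.rev i))

/-- The 4-letter DNA alphabet. -/
inductive DNA : Type
  | A | C | G | T
deriving DecidableEq, Inhabited, Repr

/-- Watson–Crick complement of a DNA nucleotide. -/
def DNA.compl : DNA → DNA
  | .A => .T
  | .T => .A
  | .C => .G
  | .G => .C

/-- Complement of a DNA string. -/
def complStr (s : List DNA) : List DNA := s.map DNA.compl

/-- Reverse of a DNA string. -/
def revStr (s : List DNA) : List DNA := s.reverse

/-- Reverse-complement of a DNA string. -/
def rcStr (s : List DNA) : List DNA := s.reverse.map DNA.compl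

/-- Hamming distance between two DNA strings (of equal length). -/
def dH (s t : List DNA) : ℕ := ((s.zip t).filter fun p => p.1 ≠ p.2).length

/-- GC-content of a DNA string: the number of positions carrying `G` or `C`. -/
def gcContent (s : List DNA) : ℕ := (s.filter fun d => d = DNA.G ∨ d = DNA.C).length

/-- A DNA string has no homopolymer run of length greater than `2` iff it has no three
consecutive equal symbols. -/
def NoHomopolymer3 (s : List DNA) : Prop := ¬ ∃ (l r : List DNA) (a : DNA), s = l ++ [a, a, a] ++ r

/-- Blockwise extension of a map `ψ : R → Σ³` to vectors over `R`, by concatenation. -/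
def Ψ (ψ : R → List DNA) {n : ℕ} (x : Fin n → R) : List DNA := (List.ofFn x).flatMap ψ

/-- The map `ψ₂` from the ideal `2R` to DNA strings of length `3`
(the restriction of the DNA map of Table I to `2R`; its value outside `2R` is irrelevant). -/
def ψ₂ (x : R) : List DNA :=
  if x = 0 then [.G, .A, .G]
  else if x = 2 then [.C, .G, .A]
  else if x = 2 * u then [.G, .T, .G]
  else if x = 2 * u ^ 2 then [.A, .G, .C]
  else if x = 2 + 2 * u then [.T, .C, .G]
  else if x = 2 + 2 * u ^ 2 then [.C, .A, .C]
  else if x = 2 * u + 2 * u ^ 2 then [.G, .C, .T]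
  else [.C, .T, .C]

/-- The rows of the Reed–Muller type generator matrix `G_{1,m}` over `R` (with parameter `z`):
`Gmat z m i j` is the entry of `G_{1,m}` in row `i` and column `j`.  Here `G_{1,0} = [z]` and
`G_{1,m+1} = [[G_{1,m}, G_{1,m}], [0 … 0, z … z]]`, which for `m = 1` gives
`G_{1,1} = [[z,z],[0,z]]`. -/
def Gmat (z : R) : (m : ℕ) → Fin (m + 1) → Fin (2 ^ m) → R
  | 0, _, _ => z
  | m + 1, i, j =>
    if hi : (i : ℕ) < m + 1 then
      Gmat z m ⟨i, hi⟩ ⟨(j : ℕ) % 2 ^ m, Nat.mod_lt _ (Nat.two_pow_pos m)⟩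
    else if (j : ℕ) < 2 ^ m then 0 else z

/-- The Reed–Muller type code `R(1,m)`: the `R`-submodule of `R^{2^m}` generated by the rows
of `G_{1,m}`. -/
def RM (z : R) (m : ℕ) : Submodule R (Fin (2 ^ m) → R) := Submodule.span R (Set.range (Gmat z m))

/-- Hamming weight of a vector over `R`. -/
def wt {N : ℕ} (c : Fin N → R) : ℕ := (Finset.univ.filter fun j => c j ≠ 0).card

/-- Hamming distance between two vectors over `R`. -/
def hdistR {N : ℕ} (c c' : Fin N → R) : ℕ := (Finset.univ.filter fun j => c j ≠ c' j).card

/-- Coordinate reversal of a vector over `R`. -/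
def revVec {N : ℕ} (c : Fin N → R) : Fin N → R := fun j => c (Fin.rev j)

/-- `a + bu + cu²` as an element of `R`, for `a, b, c ∈ ℤ₄`. -/
def toR (a b c : ZMod 4) : R :=
  algebraMap (ZMod 4) R a + algebraMap (ZMod 4) R b * u + algebraMap (ZMod 4) R c * u ^ 2

end

/-! A codeword of `R(1,m+1)` is, up to the identification `2^(m+1) = 2^m + 2^m`, a concatenation
`(x, x + w • g₀)` with `x ∈ R(1,m)` and `g₀ = (z, …, z)` the first row of `G_{1,m}`, so its weight is
`wt x + wt (x + w • g₀)` with both halves in `R(1,m)`. If neither half vanishes, induction gives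
`2 · 2^(m-1)`; if one vanishes, the other is `± w • g₀`, a nonzero constant vector of weight `2^m`.
The last row `(0, …, 0, z, …, z)` attains the bound because `z ≠ 0`, and by linearity distances are
weights of differences. -/

instance : Nontrivial R :=
  Ideal.Quotient.nontrivial_iff.mpr <| by
    have : Fact (1 < 4) := ⟨by norm_num⟩
    have hmonic : (X ^ 3 - 1 : (ZMod 4)[X]).Monic := by
      simpa using monic_X_pow_sub_C (1 : ZMod 4) three_ne_zero
    have hdeg : (X ^ 3 - 1 : (ZMod 4)[X]).natDegree = 3 := by
      simpa using natDegree_X_pow_sub_C (n := 3) (r := (1 : ZMod 4))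
    rw [Ne, Ideal.span_singleton_eq_top, hmonic.isUnit_iff]
    intro h
    simp [h] at hdeg

section Weight

variable {n : ℕ}

lemma wt_eq_zero_iff {c : Fin n → R} : wt c = 0 ↔ c = 0 := by
  simp [wt, Finset.filter_eq_empty_iff, funext_iff]

@[simp]
lemma wt_zero : wt (0 : Fin n → R) = 0 :=
  wt_eq_zero_iff.mpr rfl

lemma wt_neg (c : Fin n → R) : wt (-c) = wt c := by
  simp [wt]

lemma wt_const {r : R} (hr : r ≠ 0) : wt (fun _ : Fin n => r) = n := by
  simp [wt, hr]

lemma wt_append {a b : ℕ} (x : Fin a → R) (y : Fin b → R) :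
    wt (Fin.append x y) = wt x + wt y := by
  simp only [wt, Finset.card_filter, Fin.sum_univ_add, Fin.append_left, Fin.append_right]

lemma wt_comp_cast {a b : ℕ} (h : a = b) (c : Fin b → R) : wt (c ∘ Fin.cast h) = wt c := by
  subst h
  rfl

lemma hdistR_eq_wt_sub (c c' : Fin n → R) : hdistR c c' = wt (c - c') := by
  simp [hdistR, wt, sub_ne_zero]

end Weight

section Generator

variable (z : R)

lemma Gmat_zero_row : ∀ m, Gmat z m 0 = fun _ => z
  | 0 => rfl
  | m + 1 => by
    funext j
    simp [Gmat, Gmat_zero_row m]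

lemma Gmat_succ_castSucc (m : ℕ) (i : Fin (m + 1)) (k : Fin (2 ^ (m + 1))) :
    Gmat z (m + 1) i.castSucc k = Gmat z m i ⟨k % 2 ^ m, Nat.mod_lt _ (Nat.two_pow_pos m)⟩ := by
  simp only [Gmat, Fin.val_castSucc, Fin.eta, dif_pos i.isLt]

lemma Gmat_succ_last (m : ℕ) (k : Fin (2 ^ (m + 1))) :
    Gmat z (m + 1) (Fin.last (m + 1)) k = if (k : ℕ) < 2 ^ m then 0 else z := by
  simp [Gmat]

lemma Gmat_last_comp_cast (m : ℕ) :
    Gmat z (m + 1) (Fin.last (m + 1)) ∘ Fin.cast (Nat.two_pow_succ m).symm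
      = Fin.append 0 (Gmat z m 0) := by
  funext k
  refine Fin.addCases (fun j => ?_) (fun j => ?_) k <;>
    simp [-Fin.natAdd_eq_addNat, Gmat_succ_last, Gmat_zero_row]

lemma exists_append_of_mem_RM_succ {m : ℕ} {c : Fin (2 ^ (m + 1)) → R} (hc : c ∈ RM z (m + 1)) :
    ∃ x ∈ RM z m, ∃ w : R,
      c ∘ Fin.cast (Nat.two_pow_succ m).symm = Fin.append x (x + w • Gmat z m 0) := by
  obtain ⟨a, rfl⟩ := (Submodule.mem_span_range_iff_exists_fun R).mp hc
  refine ⟨∑ i, a i.castSucc • Gmat z m i,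
    sum_mem fun i _ => Submodule.smul_mem _ _ (Submodule.subset_span ⟨i, rfl⟩), a (Fin.last _),
    funext fun k => Fin.addCases (fun j => ?_) (fun j => ?_) k⟩
  all_goals
    rw [Function.comp_apply, Finset.sum_apply, Fin.sum_univ_castSucc]
    simp [-Fin.natAdd_eq_addNat, Finset.sum_apply, Gmat_succ_castSucc, Gmat_succ_last,
      Gmat_zero_row, Nat.mod_eq_of_lt j.isLt]

end Generator

lemma wt_smul_Gmat_zero {z w : R} {m : ℕ} (h : w • Gmat z m 0 ≠ 0) :
    wt (w • Gmat z m 0) = 2 ^ m := by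
  have hconst : w • Gmat z m 0 = fun _ => w * z := by
    rw [Gmat_zero_row]
    rfl
  rw [hconst] at h ⊢
  exact wt_const fun hwz => h (funext fun _ => hwz)

lemma two_pow_pred_le_wt_of_mem_RM (z : R) :
    ∀ (m : ℕ), ∀ c ∈ RM z m, c ≠ 0 → 2 ^ (m - 1) ≤ wt c
  | 0, _, _, hc => Nat.one_le_iff_ne_zero.mpr (wt_eq_zero_iff.not.mpr hc)
  | m + 1, c, hc, hc0 => by
    obtain ⟨x, hx, w, hcxw⟩ := exists_append_of_mem_RM_succ z hc
    set y := x + w • Gmat z m 0 with hy_def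
    have hy : y ∈ RM z m := add_mem hx (Submodule.smul_mem _ _ (Submodule.subset_span ⟨0, rfl⟩))
    have hwt : wt c = wt x + wt y := by
      rw [← wt_comp_cast (Nat.two_pow_succ m).symm, hcxw, wt_append]
    have hwt0 : wt c ≠ 0 := wt_eq_zero_iff.not.mpr hc0
    rw [Nat.add_sub_cancel, hwt]
    by_cases hx0 : x = 0
    · have hyw : y = w • Gmat z m 0 := by rw [hy_def, hx0, zero_add]
      have hy0 : y ≠ 0 := fun hy0 => hwt0 (by rw [hwt, hx0, hy0, wt_zero])
      rw [hyw] at hy0 ⊢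
      rw [wt_smul_Gmat_zero hy0]
      omega
    by_cases hy0 : y = 0
    · have hxw : x = -(w • Gmat z m 0) := eq_neg_of_add_eq_zero_left hy0
      rw [hxw] at hx0 ⊢
      rw [wt_neg, wt_smul_Gmat_zero (neg_ne_zero.mp hx0)]
      omega
    have hpow : 2 ^ m ≤ 2 ^ (m - 1) + 2 ^ (m - 1) := by
      rw [← Nat.two_pow_succ]
      exact Nat.pow_le_pow_right two_pos (by omega)
    have := two_pow_pred_le_wt_of_mem_RM z m x hx hx0
    have := two_pow_pred_le_wt_of_mem_RM z m y hy hy0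
    omega

lemma wt_Gmat_last {z : R} (hz : z ≠ 0) : ∀ m, wt (Gmat z m (Fin.last m)) = 2 ^ (m - 1)
  | 0 => wt_const hz
  | m + 1 => by
    rw [← wt_comp_cast (Nat.two_pow_succ m).symm, Gmat_last_comp_cast, wt_append, Gmat_zero_row,
      wt_const hz, wt_zero, zero_add, Nat.add_sub_cancel]

theorem stmt14_general (z : R) (hz : IsUnit z) (m : ℕ) :
    (∀ c ∈ RM z m, c ≠ 0 → 2 ^ (m - 1) ≤ wt c) ∧
    (Gmat z m (Fin.last m) ∈ RM z m ∧ Gmat z m (Fin.last m) ≠ 0 ∧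
      wt (Gmat z m (Fin.last m)) = 2 ^ (m - 1)) ∧
    (∀ c ∈ RM z m, ∀ c' ∈ RM z m, c ≠ c' → 2 ^ (m - 1) ≤ hdistR c c') ∧
    (∃ c ∈ RM z m, ∃ c' ∈ RM z m, c ≠ c' ∧ hdistR c c' = 2 ^ (m - 1)) := by
  have hlow := two_pow_pred_le_wt_of_mem_RM z m
  have hlast_mem : Gmat z m (Fin.last m) ∈ RM z m := Submodule.subset_span ⟨Fin.last m, rfl⟩
  have hlast_wt := wt_Gmat_last hz.ne_zero m
  have hlast_ne : Gmat z m (Fin.last m) ≠ 0 :=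
    wt_eq_zero_iff.not.mp (hlast_wt ▸ (Nat.two_pow_pos _).ne')
  refine ⟨hlow, ⟨hlast_mem, hlast_ne, hlast_wt⟩, fun c hc c' hc' hne => ?_,
    ⟨_, hlast_mem, 0, zero_mem _, hlast_ne, ?_⟩⟩
  · rw [hdistR_eq_wt_sub]
    exact hlow _ (sub_mem hc hc') (sub_ne_zero.mpr hne)
  · rw [hdistR_eq_wt_sub, sub_zero, hlast_wt]

/-- If `z` is a unit of `R`, the minimum Hamming weight of a nonzero codeword of `R(1,m)` is
exactly `2^{m-1}`, the last row of `G_{1,m}` being a nonzero codeword of weight exactly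
`2^{m-1}`; consequently the minimum Hamming distance between distinct codewords equals
`2^{m-1}`. -/
theorem stmt14 (z : R) (hz : IsUnit z) (m : ℕ) (hm : 1 ≤ m) :
    (∀ c ∈ RM z m, c ≠ 0 → 2 ^ (m - 1) ≤ wt c) ∧
    (Gmat z m (Fin.last m) ∈ RM z m ∧ Gmat z m (Fin.last m) ≠ 0 ∧
      wt (Gmat z m (Fin.last m)) = 2 ^ (m - 1)) ∧
    (∀ c ∈ RM z m, ∀ c' ∈ RM z m, c ≠ c' → 2 ^ (m - 1) ≤ hdistR c c') ∧
    (∃ c ∈ RM z m, ∃ c' ∈ RM z m, c ≠ c' ∧ hdistR c c' = 2 ^ (m - 1)) :=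
  stmt14_general z hz m
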